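/- For every λ > 0 and every irrational α, both λ and −λ belong to σ^H(c,v); moreover, the set σ^H(c,v) ∩ (−λ, λ) is nonempty. -/

import Mathlib

/-!
Split `ℤ` into the blocks `{2k, 2k+1}`, on which `H` acts as `cos (2π(2kα + θ))` times the all-ones
`2 × 2` matrix, and the bonds `{2k+1, 2k+2}`, which carry `λ` times the flip `[[0,1],[1,0]]`.
A unimodular sequence that sums to zero on every block and is a `±1`-eigenvector of the flip on
every bond solves `H u = ±λ u`; its truncations have bounded residual and unbounded norm, so
`±λ ∈ σ(H)`. Since `H` is self-adjoint, `‖H⁻¹‖` is the spectral radius of `H⁻¹`, so if `σ(H)`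
avoided `(-λ, λ)` we would have `‖H x‖ ≥ λ ‖x‖` for all `x`. The vector
`e_{2k} - e_{2k+1} + t e_{2k+2}` with `t = λ / (2 cos (2π((2k+2)α + θ)))` violates this, and
irrationality of `α` provides a `k` for which that cosine does not vanish.
-/

open MeasureTheory Filter Real

noncomputable section

/-- Distance from a real number to the nearest integer, `‖x‖_𝕋`. -/
def distT (x : ℝ) : ℝ := |x - round x|

/-- `α ∈ DC(γ,σ)`. -/
def DiophantineCond (γ σ α : ℝ) : Prop :=
  ∀ k : ℤ, k ≠ 0 → γ / |(k : ℝ)| ^ σ ≤ distT (k * α)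

/-- `α ∈ DC = ⋃_{γ,σ>0} DC(γ,σ)`. -/
def Diophantine (α : ℝ) : Prop :=
  ∃ γ σ : ℝ, 0 < γ ∧ 0 < σ ∧ DiophantineCond γ σ α

/-- The mosaic-type potential `v(θ,n)`. -/
def mosV (α lam θ : ℝ) (n : ℤ) : ℝ :=
  if Odd n then Real.cos (2 * π * (((n : ℝ) - 1) * α + θ))
  else Real.cos (2 * π * ((n : ℝ) * α + θ))

/-- The mosaic-type hopping `c(θ,n)`. -/
def mosC (α lam θ : ℝ) (n : ℤ) : ℝ :=
  if Odd n then lam else Real.cos (2 * π * ((n : ℝ) * α + θ))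

/-- `θ ∈ 𝕋₀`. -/
def memT0 (α θ : ℝ) : Prop := ∀ n : ℤ, Real.cos (2 * π * ((n : ℝ) * α + θ)) ≠ 0

/-- The Hilbert space `ℓ²(ℤ,ℂ)`. -/
abbrev ZSeq := lp (fun _ : ℤ => ℂ) 2

/-- `H` acts as the mosaic-type Jacobi operator `H_{c,v,θ}` on `ℓ²(ℤ)`. -/
def IsMosaicOp (α lam θ : ℝ) (H : ZSeq →L[ℂ] ZSeq) : Prop :=
  ∀ u : ZSeq, ∀ n : ℤ,
    (H u : ∀ _ : ℤ, ℂ) n =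
      (mosC α lam θ n : ℂ) * (u : ∀ _ : ℤ, ℂ) (n + 1)
      + (mosC α lam θ (n - 1) : ℂ) * (u : ∀ _ : ℤ, ℂ) (n - 1)
      + (mosV α lam θ n : ℂ) * (u : ∀ _ : ℤ, ℂ) n

/-- The spectrum of `H`, viewed as a subset of `ℝ`. -/
def realSpectrum (H : ZSeq →L[ℂ] ZSeq) : Set ℝ := {E : ℝ | (E : ℂ) ∈ spectrum ℂ H}

/-- `μ` is the spectral measure of the bounded self-adjoint operator `H` at the vector `φ`:
it is compactly supported and has the correct moments. -/
def IsSpectralMeasure (H : ZSeq →L[ℂ] ZSeq) (φ : ZSeq) (μ : Measure ℝ) : Prop :=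
  (∃ R : ℝ, μ {x : ℝ | R < |x|} = 0) ∧
  ∀ k : ℕ, (∫ x : ℝ, (x : ℂ) ^ k ∂μ) = @inner ℂ _ _ φ ((H ^ k) φ)

/-- The restriction of `μ` to `B` is singular continuous: it is mutually singular with
Lebesgue measure and has no atoms. -/
def SingContOn (μ : Measure ℝ) (B : Set ℝ) : Prop :=
  (μ.restrict B).MutuallySingular volume ∧ ∀ x : ℝ, μ.restrict B {x} = 0

/-- The restriction of `μ` to `B` is absolutely continuous w.r.t. Lebesgue measure. -/
def AbsContOn (μ : Measure ℝ) (B : Set ℝ) : Prop := μ.restrict B ≪ volume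

/-- The restriction of `μ` to `B` is pure point (supported on a countable set). -/
def PurePointOn (μ : Measure ℝ) (B : Set ℝ) : Prop :=
  ∃ D : Set ℝ, D.Countable ∧ μ.restrict B Dᶜ = 0

/-- `u : ℤ → ℂ` is a formal solution of `H_{c,v,θ} u = E u`. -/
def MosaicEigenEq (α lam θ E : ℝ) (u : ℤ → ℂ) : Prop :=
  ∀ n : ℤ,
    (mosC α lam θ n : ℂ) * u (n + 1) + (mosC α lam θ (n - 1) : ℂ) * u (n - 1)
      + (mosV α lam θ n : ℂ) * u n = (E : ℂ) * u n

/-- Anderson localization of the mosaic operator in the set `S`: pure point spectrum in `S`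
together with exponential decay of the eigenfunctions with eigenvalue in `S`. -/
def AndersonLocalizationIn (α lam θ : ℝ) (H : ZSeq →L[ℂ] ZSeq) (S : Set ℝ) : Prop :=
  (∀ φ : ZSeq, ∀ μ : Measure ℝ, IsSpectralMeasure H φ μ → PurePointOn μ S) ∧
  (∀ E ∈ S, ∀ u : ℤ → ℂ, Memℓp u 2 → u ≠ 0 → MosaicEigenEq α lam θ E u →
    ∃ C γ : ℝ, 0 < γ ∧ ∀ n : ℤ, ‖u n‖ ≤ C * Real.exp (-γ * |(n : ℝ)|))

theorem ContinuousLinearMap.norm_le_norm_inv_mul_norm_apply {𝕜 E : Type*}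
    [NontriviallyNormedField 𝕜] [NormedAddCommGroup E] [NormedSpace 𝕜 E]
    (u : (E →L[𝕜] E)ˣ) (x : E) : ‖x‖ ≤ ‖(↑u⁻¹ : E →L[𝕜] E)‖ * ‖(u : E →L[𝕜] E) x‖ :=
  calc ‖x‖ = ‖(↑u⁻¹ : E →L[𝕜] E) ((u : E →L[𝕜] E) x)‖ := by
        rw [← mul_apply_eq_comp, u.inv_mul, one_apply_eq_self]
    _ ≤ _ := le_opNorm _ _

theorem ContinuousLinearMap.mem_spectrum_of_bounded_residual {𝕜 E : Type*}
    [NontriviallyNormedField 𝕜] [NormedAddCommGroup E] [NormedSpace 𝕜 E] {T : E →L[𝕜] E} {c : 𝕜}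
    {x : ℕ → E} {R : ℝ} (hres : ∀ N, ‖c • x N - T (x N)‖ ≤ R)
    (hx : Tendsto (fun N => ‖x N‖) atTop atTop) : c ∈ spectrum 𝕜 T := by
  by_contra hc
  obtain ⟨u, hu⟩ := spectrum.notMem_iff.mp hc
  have hbound (N : ℕ) : ‖x N‖ ≤ ‖(↑u⁻¹ : E →L[𝕜] E)‖ * R := by
    refine (norm_le_norm_inv_mul_norm_apply u (x N)).trans ?_
    gcongr
    simpa [hu, Algebra.algebraMap_eq_smul_one] using hres N
  obtain ⟨N, hN⟩ := (hx.eventually_gt_atTop (‖(↑u⁻¹ : E →L[𝕜] E)‖ * R)).exists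
  exact (hbound N).not_gt hN

theorem IsSelfAdjoint.norm_units_inv_le {A : Type*} [CStarAlgebra A] {u : Aˣ}
    (hu : IsSelfAdjoint (u : A)) {r : ℝ} (hr : 0 < r) (h : ∀ z ∈ spectrum ℂ (u : A), r ≤ ‖z‖) :
    ‖(↑u⁻¹ : A)‖ ≤ r⁻¹ := by
  have hinv : IsSelfAdjoint (↑u⁻¹ : A) := by
    rw [IsSelfAdjoint, ← Units.coe_star_inv, Units.ext ((Units.coe_star u).trans hu.star_eq)]
  rw [← hinv.toReal_spectralRadius_complex_eq_norm]
  refine ENNReal.toReal_le_of_le_ofReal (by positivity) (iSup₂_le fun z hz => ?_)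
  rw [← spectrum.map_inv, Set.mem_inv] at hz
  have hz' : r ≤ ‖z‖⁻¹ := norm_inv z ▸ h _ hz
  rw [← ENNReal.ofReal_coe_nnreal, coe_nnnorm]
  exact ENNReal.ofReal_le_ofReal (le_inv_of_le_inv₀ hr hz')

section SelfAdjoint

variable {E : Type*} [NormedAddCommGroup E] [InnerProductSpace ℂ E] [CompleteSpace E]
  {T : E →L[ℂ] E}

theorem IsSelfAdjoint.mul_norm_le_norm_apply (hT : IsSelfAdjoint T) {r : ℝ} (hr : 0 < r)
    (h : ∀ z ∈ spectrum ℂ T, r ≤ ‖z‖) (x : E) : r * ‖x‖ ≤ ‖T x‖ := by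
  have h0 : (0 : ℂ) ∉ spectrum ℂ T := fun h0 => by simpa using (h 0 h0).trans_lt' hr
  obtain ⟨u, rfl⟩ := (spectrum.zero_notMem_iff ℂ).mp h0
  calc r * ‖x‖ ≤ r * (r⁻¹ * ‖(u : E →L[ℂ] E) x‖) := by
        gcongr
        exact (ContinuousLinearMap.norm_le_norm_inv_mul_norm_apply u x).trans
          (by gcongr; exact hT.norm_units_inv_le hr h)
    _ = ‖(u : E →L[ℂ] E) x‖ := by field_simp

theorem IsSelfAdjoint.exists_mem_spectrum_Ioo_of_norm_apply_lt (hT : IsSelfAdjoint T) {r : ℝ}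
    {x : E} (hx : ‖T x‖ < r * ‖x‖) : ∃ t ∈ Set.Ioo (-r) r, (t : ℂ) ∈ spectrum ℂ T := by
  have hr : 0 < r := pos_of_mul_pos_left ((norm_nonneg _).trans_lt hx) (norm_nonneg x)
  by_contra! h
  refine (hT.mul_norm_le_norm_apply hr (fun z hz => ?_) x).not_gt hx
  have hz_re := hT.mem_spectrum_eq_re hz
  rw [hz_re] at hz ⊢
  rw [Complex.norm_real, Real.norm_eq_abs, le_abs']
  by_contra! hz'
  exact h _ hz' hz

end SelfAdjoint

theorem lp.norm_add_single_sq (𝕜 : Type*) {ι : Type*} [RCLike 𝕜] {G : ι → Type*}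
    [∀ i, NormedAddCommGroup (G i)] [∀ i, InnerProductSpace 𝕜 (G i)] [DecidableEq ι]
    (f : lp G 2) (i : ι) (a : G i) (hf : f i = 0) :
    ‖f + lp.single 2 i a‖ ^ 2 = ‖f‖ ^ 2 + ‖a‖ ^ 2 := by
  rw [@norm_add_sq 𝕜, lp.inner_single_right, hf, inner_zero_left, map_zero, mul_zero, add_zero,
    lp.norm_single (by norm_num)]

def truncation (φ : ℤ → ℂ) (N : ℕ) : ZSeq := ∑ n ∈ Finset.Icc (0 : ℤ) N, lp.single 2 n (φ n)

theorem truncation_apply (φ : ℤ → ℂ) (N : ℕ) (m : ℤ) :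
    (truncation φ N : ∀ _ : ℤ, ℂ) m = if 0 ≤ m ∧ m ≤ N then φ m else 0 := by
  rw [truncation, lp.coeFn_sum, Finset.sum_apply]
  simp only [lp.coeFn_single, Finset.sum_pi_single, Finset.mem_Icc]

theorem norm_truncation {φ : ℤ → ℂ} (hφ : ∀ n, ‖φ n‖ = 1) (N : ℕ) :
    ‖truncation φ N‖ = Real.sqrt (N + 1) := by
  have h := lp.norm_sum_single (p := 2) (by norm_num) φ (Finset.Icc (0 : ℤ) N)
  simp only [hφ, ENNReal.toReal_ofNat, Real.one_rpow, Finset.sum_const, Int.card_Icc, sub_zero,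
    nsmul_eq_mul, mul_one] at h
  rw [← Real.sqrt_sq (norm_nonneg _), truncation]
  norm_cast at h ⊢
  rw [h]

theorem tendsto_norm_truncation {φ : ℤ → ℂ} (hφ : ∀ n, ‖φ n‖ = 1) :
    Tendsto (fun N => ‖truncation φ N‖) atTop atTop := by
  simp only [norm_truncation hφ]
  exact Real.tendsto_sqrt_atTop.comp
    (tendsto_atTop_add_const_right _ 1 tendsto_natCast_atTop_atTop)

-- `IsMosaicOp α lam θ` unfolds to `IsJacobiOp (mosC α lam θ) (mosV α lam θ)`.
def IsJacobiOp (a b : ℤ → ℝ) (H : ZSeq →L[ℂ] ZSeq) : Prop :=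
  ∀ u : ZSeq, ∀ n : ℤ,
    (H u : ∀ _ : ℤ, ℂ) n =
      (a n : ℂ) * (u : ∀ _ : ℤ, ℂ) (n + 1) + (a (n - 1) : ℂ) * (u : ∀ _ : ℤ, ℂ) (n - 1)
      + (b n : ℂ) * (u : ∀ _ : ℤ, ℂ) n

namespace IsJacobiOp

variable {a b : ℤ → ℝ} {H : ZSeq →L[ℂ] ZSeq}

theorem apply_single (hH : IsJacobiOp a b H) (m : ℤ) (z : ℂ) :
    H (lp.single 2 m z) = lp.single 2 (m - 1) (a (m - 1) * z) + lp.single 2 (m + 1) (a m * z)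
      + lp.single 2 m (b m * z) := by
  apply lp.ext
  funext n
  simp only [hH _ n, lp.coeFn_add, Pi.add_apply, lp.single_apply, Pi.single_apply]
  split_ifs <;> first | omega | (subst_vars; ring_nf)

theorem isSelfAdjoint (hH : IsJacobiOp a b H) : IsSelfAdjoint H := by
  rw [ContinuousLinearMap.isSelfAdjoint_iff']
  have : Fact (1 ≤ (2 : ENNReal)) := ⟨by norm_num⟩
  refine lp.ext_continuousLinearMap (by norm_num) fun m => ?_
  ext : 1
  apply lp.ext
  funext n
  have hcoord (f : ZSeq) : (f : ∀ _ : ℤ, ℂ) n = inner ℂ (lp.single 2 n (1 : ℂ)) f := by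
    simp [lp.inner_single_left]
  simp only [ContinuousLinearMap.comp_apply, lp.singleContinuousLinearMap_apply]
  rw [hcoord, ContinuousLinearMap.adjoint_inner_right, lp.inner_single_right, hH.apply_single,
    hH.apply_single]
  simp only [lp.coeFn_add, Pi.add_apply, lp.single_apply, Pi.single_apply, RCLike.inner_apply]
  split_ifs <;> first | omega | (subst_vars; simp)

theorem smul_truncation_sub_apply_truncation (hH : IsJacobiOp a b H) {E : ℂ} {φ : ℤ → ℂ}
    (hφ : ∀ n, a n * φ (n + 1) + a (n - 1) * φ (n - 1) + b n * φ n = E * φ n) {N : ℕ}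
    (hN : 1 ≤ N) :
    E • truncation φ N - H (truncation φ N) =
      lp.single 2 (-1 : ℤ) (-(a (-1) * φ 0)) + lp.single 2 (0 : ℤ) (a (-1) * φ (-1))
        + lp.single 2 (N : ℤ) (a N * φ (N + 1)) + lp.single 2 ((N : ℤ) + 1) (-(a N * φ N)) := by
  apply lp.ext
  funext m
  have hm := hφ m
  simp only [lp.coeFn_sub, lp.coeFn_smul, lp.coeFn_add, Pi.add_apply, Pi.sub_apply,
    Pi.smul_apply, hH _ m, truncation_apply, lp.single_apply, Pi.single_apply, smul_eq_mul]
  split_ifs <;> first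
    | omega | (subst_vars; ring_nf; done) | (subst_vars; linear_combination (norm := ring_nf) -hm)

theorem mem_spectrum_of_unimodular_solution (hH : IsJacobiOp a b H) {A : ℝ}
    (ha : ∀ n, |a n| ≤ A) {E : ℂ} {φ : ℤ → ℂ}
    (hφ : ∀ n, a n * φ (n + 1) + a (n - 1) * φ (n - 1) + b n * φ n = E * φ n)
    (hφ_norm : ∀ n, ‖φ n‖ = 1) : E ∈ spectrum ℂ H := by
  have hsingle (m k l : ℤ) : ‖(lp.single 2 m ((a k : ℂ) * φ l) : ZSeq)‖ ≤ A := by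
    rw [lp.norm_single (by norm_num), norm_mul, hφ_norm, mul_one, Complex.norm_real,
      Real.norm_eq_abs]
    exact ha k
  refine ContinuousLinearMap.mem_spectrum_of_bounded_residual
    (x := fun N => truncation φ (N + 1)) (R := A + A + A + A) (fun N => ?_)
    ((tendsto_norm_truncation hφ_norm).comp (tendsto_add_atTop_nat 1))
  rw [hH.smul_truncation_sub_apply_truncation hφ (by omega), lp.single_neg, lp.single_neg]
  refine norm_add₄_le.trans ?_
  simp only [norm_neg]
  gcongr <;> apply hsingle

end IsJacobiOp

section Mosaic

variable {α lam θ : ℝ}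

theorem mosC_of_odd {n : ℤ} (hn : Odd n) : mosC α lam θ n = lam := if_pos hn

theorem mosV_of_even {n : ℤ} (hn : Even n) : mosV α lam θ n = mosC α lam θ n := by
  simp only [mosV, mosC, Int.not_odd_iff_even.mpr hn, if_false]

theorem mosV_of_odd {n : ℤ} (hn : Odd n) : mosV α lam θ n = mosC α lam θ (n - 1) := by
  have hn' : ¬Odd (n - 1) := Int.not_odd_iff_even.mpr (hn.sub_odd odd_one)
  simp only [mosV, mosC, hn, hn', if_true, if_false]
  push_cast
  rfl

theorem abs_mosC_le (n : ℤ) : |mosC α lam θ n| ≤ max |lam| 1 := by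
  unfold mosC
  split_ifs
  · exact le_max_left _ _
  · exact (Real.abs_cos_le_one _).trans (le_max_right _ _)

theorem mosaic_row_two_mul (u : ℤ → ℂ) (k : ℤ) :
    (mosC α lam θ (2 * k) : ℂ) * u (2 * k + 1) + (mosC α lam θ (2 * k - 1) : ℂ) * u (2 * k - 1)
      + (mosV α lam θ (2 * k) : ℂ) * u (2 * k)
      = mosC α lam θ (2 * k) * (u (2 * k) + u (2 * k + 1)) + lam * u (2 * k - 1) := by
  rw [mosC_of_odd (n := 2 * k - 1) (Int.odd_iff.mpr (by omega)), mosV_of_even (even_two_mul k)]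
  ring

theorem mosaic_row_two_mul_add_one (u : ℤ → ℂ) (k : ℤ) :
    (mosC α lam θ (2 * k + 1) : ℂ) * u (2 * k + 1 + 1)
      + (mosC α lam θ (2 * k + 1 - 1) : ℂ) * u (2 * k + 1 - 1)
      + (mosV α lam θ (2 * k + 1) : ℂ) * u (2 * k + 1)
      = mosC α lam θ (2 * k) * (u (2 * k) + u (2 * k + 1)) + lam * u (2 * k + 2) := by
  rw [mosC_of_odd (odd_two_mul_add_one k), mosV_of_odd (odd_two_mul_add_one k),
    add_sub_cancel_right, show 2 * k + 1 + 1 = 2 * k + 2 by ring]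
  ring

def mosaicSolution (σ : ℝ) (n : ℤ) : ℂ := (if Even n then -1 else 1) * (-(σ : ℂ)) ^ (n / 2)

theorem mosaicSolution_two_mul (σ : ℝ) (k : ℤ) :
    mosaicSolution σ (2 * k) = -(-(σ : ℂ)) ^ k := by
  simp [mosaicSolution]

theorem mosaicSolution_two_mul_add_one (σ : ℝ) (k : ℤ) :
    mosaicSolution σ (2 * k + 1) = (-(σ : ℂ)) ^ k := by
  rw [mosaicSolution, if_neg (Int.not_even_iff_odd.mpr (odd_two_mul_add_one k)), one_mul,
    show (2 * k + 1) / 2 = k by omega]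

theorem norm_mosaicSolution {σ : ℝ} (hσ : |σ| = 1) (n : ℤ) : ‖mosaicSolution σ n‖ = 1 := by
  simp [mosaicSolution, hσ, apply_ite]

theorem mosaicEigenEq_mosaicSolution {σ : ℝ} (hσ : |σ| = 1) :
    MosaicEigenEq α lam θ (σ * lam) (mosaicSolution σ) := by
  have hσσ : (σ : ℂ) * σ = 1 := by
    have : σ * σ = 1 := by rw [← abs_mul_abs_self, hσ, one_mul]
    exact_mod_cast this
  have hσ0 : (-(σ : ℂ)) ≠ 0 := neg_ne_zero.mpr fun h => by simp [h] at hσσ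
  have hinv : (-(σ : ℂ))⁻¹ = -(σ : ℂ) := by rw [inv_neg, inv_eq_of_mul_eq_one_right hσσ]
  intro n
  obtain ⟨k, rfl | rfl⟩ := Int.even_or_odd' n
  · rw [mosaic_row_two_mul, show 2 * k - 1 = 2 * (k - 1) + 1 by ring, mosaicSolution_two_mul,
      mosaicSolution_two_mul_add_one, mosaicSolution_two_mul_add_one, zpow_sub_one₀ hσ0, hinv]
    push_cast
    ring
  · rw [mosaic_row_two_mul_add_one, show 2 * k + 2 = 2 * (k + 1) by ring, mosaicSolution_two_mul,
      mosaicSolution_two_mul_add_one, mosaicSolution_two_mul, zpow_add_one₀ hσ0]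
    push_cast
    ring

theorem exists_mosC_two_mul_add_two_ne_zero (hα : Irrational α) :
    ∃ k : ℤ, mosC α lam θ (2 * k + 2) ≠ 0 := by
  by_contra! h
  have h0 := h (-1)
  have h2 := h 0
  simp only [mosC, show ¬Odd (2 * (-1 : ℤ) + 2) by decide, show ¬Odd (2 * (0 : ℤ) + 2) by decide,
    if_false, Real.cos_eq_zero_iff] at h0 h2
  obtain ⟨p, hp⟩ := h0
  obtain ⟨q, hq⟩ := h2
  push_cast at hp hq
  refine hα ⟨(q - p) / 4, ?_⟩
  have : π * (4 * α) = π * (q - p) := by linarith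
  push_cast
  linarith [mul_left_cancel₀ Real.pi_ne_zero this]

theorem IsMosaicOp.mul_mem_realSpectrum {H : ZSeq →L[ℂ] ZSeq} (hH : IsMosaicOp α lam θ H)
    {σ : ℝ} (hσ : |σ| = 1) : σ * lam ∈ realSpectrum H :=
  IsJacobiOp.mem_spectrum_of_unimodular_solution hH abs_mosC_le
    (mosaicEigenEq_mosaicSolution hσ) (norm_mosaicSolution hσ)

theorem IsMosaicOp.exists_norm_apply_lt {H : ZSeq →L[ℂ] ZSeq} (hH : IsMosaicOp α lam θ H)
    (hα : Irrational α) (hlam : 0 < lam) : ∃ x : ZSeq, ‖H x‖ < lam * ‖x‖ := by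
  have hJ : IsJacobiOp (mosC α lam θ) (mosV α lam θ) H := hH
  obtain ⟨k, hw⟩ := exists_mosC_two_mul_add_two_ne_zero (lam := lam) (θ := θ) hα
  set w := mosC α lam θ (2 * k + 2)
  set t : ℝ := lam / (2 * w)
  have hwt : w * t = lam / 2 := by simp only [t]; field_simp
  set x : ZSeq :=
    lp.single 2 (2 * k) 1 + lp.single 2 (2 * k + 1) (-1) + lp.single 2 (2 * k + 2) t
  have hHx : H x =
      lp.single 2 (2 * k - 1) (lam : ℂ) + lp.single 2 (2 * k + 1) ((lam * t : ℝ) : ℂ)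
        + lp.single 2 (2 * k + 2) ((w * t - lam : ℝ) : ℂ)
        + lp.single 2 (2 * k + 3) ((w * t : ℝ) : ℂ) := by
    simp only [x, map_add, hJ.apply_single]
    rw [mosC_of_odd (n := 2 * k - 1) (Int.odd_iff.mpr (by omega)),
      mosC_of_odd (n := 2 * k + 1) (Int.odd_iff.mpr (by omega)),
      mosC_of_odd (n := 2 * k + 2 - 1) (Int.odd_iff.mpr (by omega)),
      mosV_of_even (n := 2 * k) (Int.even_iff.mpr (by omega)),
      mosV_of_odd (n := 2 * k + 1) (Int.odd_iff.mpr (by omega)),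
      mosV_of_even (n := 2 * k + 2) (Int.even_iff.mpr (by omega)), add_sub_cancel_right]
    apply lp.ext
    funext n
    simp only [lp.coeFn_add, Pi.add_apply, lp.single_apply, Pi.single_apply]
    split_ifs <;> first | omega | (push_cast; ring)
  have hx_norm : ‖x‖ ^ 2 = 2 + t ^ 2 := by
    rw [lp.norm_add_single_sq ℂ _ _ _ (by simp [lp.single_apply]),
      lp.norm_add_single_sq ℂ _ _ _ (by simp [lp.single_apply]),
      lp.norm_single (by norm_num)]
    norm_num [Complex.norm_real]
  have hHx_norm : ‖H x‖ ^ 2 = lam ^ 2 * (3 / 2 + t ^ 2) := by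
    rw [hHx,
      lp.norm_add_single_sq ℂ _ _ _ (by simp [lp.single_apply, Pi.single_apply]; omega),
      lp.norm_add_single_sq ℂ _ _ _ (by simp [lp.single_apply, Pi.single_apply]; omega),
      lp.norm_add_single_sq ℂ _ _ _ (by simp [lp.single_apply, Pi.single_apply]; omega),
      lp.norm_single (by norm_num)]
    simp only [Complex.norm_real, Real.norm_eq_abs, sq_abs, hwt]
    ring
  refine ⟨x, lt_of_pow_lt_pow_left₀ 2 (by positivity) ?_⟩
  rw [mul_pow, hHx_norm, hx_norm]
  nlinarith

end Mosaic

/-- For every `λ > 0` and every irrational `α`, both `λ` and `−λ` belong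
to `σ^H(c,v)`; moreover, the set `σ^H(c,v) ∩ (−λ, λ)` is nonempty. -/
theorem mosaic_pm_lambda_in_spectrum (α lam θ : ℝ) (hα : Irrational α) (hlam : 0 < lam)
    (H : ZSeq →L[ℂ] ZSeq) (hH : IsMosaicOp α lam θ H) :
    lam ∈ realSpectrum H ∧ -lam ∈ realSpectrum H ∧
      (realSpectrum H ∩ Set.Ioo (-lam) lam).Nonempty := by
  obtain ⟨x, hx⟩ := hH.exists_norm_apply_lt hα hlam
  obtain ⟨t, ht, htH⟩ :=
    (IsJacobiOp.isSelfAdjoint hH).exists_mem_spectrum_Ioo_of_norm_apply_lt hx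
  refine ⟨?_, ?_, ⟨t, htH, ht⟩⟩
  · simpa using hH.mul_mem_realSpectrum (σ := 1) (by simp)
  · simpa using hH.mul_mem_realSpectrum (σ := -1) (by simp)
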